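/- Assume every sort has at least two generators. Let s be a sort with at least one but only finitely many infinite trees, and let S_1I be the set of sorts having exactly one infinite tree. Then every infinite tree of sort s is the value of a finite term built from the generators whose variables are among { u_{s'} | s' ∈ S_1I }, under the valuation sending each variable u_{s'} to the unique infinite tree of sort s'. -/

import Mathlib

set_option linter.unusedVariables false


/-- A many-sorted signature: sorts and generators (function symbols),
each generator `g` having argument sorts `src g` and target sort `tgt g`. -/
structure Sig where
  Srt : Type
  Gen : Type
  tgt : Gen → Srt
  src : Gen → List Srt

namespace Sig

variable (σ : Sig)

/-- The generators of a sort `s`. -/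
def Gens (s : σ.Srt) : Set σ.Gen := { g | σ.tgt g = s }

/-- A labeling of positions (lists of natural numbers) by generators is a valid
tree labeling if children exist exactly according to arity and have the right sorts. -/
def IsLabeling (L : List ℕ → Option σ.Gen) : Prop :=
  (∀ p, L p = none → ∀ i, L (p ++ [i]) = none) ∧
  (∀ p g, L p = some g → ∀ i, ((L (p ++ [i])).isSome ↔ i < (σ.src g).length)) ∧
  (∀ p g i g', L p = some g → L (p ++ [i]) = some g' →
      (σ.src g)[i]? = some (σ.tgt g'))

/-- A (possibly infinite) tree of sort `s`. -/
structure Tree (s : σ.Srt) where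
  L : List ℕ → Option σ.Gen
  isLab : σ.IsLabeling L
  root : ∃ g, L [] = some g ∧ σ.tgt g = s

variable {σ}

/-- A tree is finite if it has finitely many nodes. -/
def Tree.IsFinite {s : σ.Srt} (t : σ.Tree s) : Prop :=
  { p : List ℕ | (t.L p).isSome }.Finite

/-- The tree has depth at most `d`. -/
def Tree.DepthLE {s : σ.Srt} (t : σ.Tree s) (d : ℕ) : Prop :=
  ∀ p, (t.L p).isSome → p.length ≤ d

variable (σ)

/-- Build a tree with root labeled `g` from given immediate subtrees. -/
def build (g : σ.Gen) (c : ∀ i : Fin (σ.src g).length, σ.Tree ((σ.src g).get i)) :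
    σ.Tree (σ.tgt g) where
  L := fun p =>
    match p with
    | [] => some g
    | i :: q => if h : i < (σ.src g).length then (c ⟨i, h⟩).L q else none
  isLab := by
    refine ⟨?_, ?_, ?_⟩
    · intro p hp i
      match p with
      | [] => simp at hp
      | j :: q =>
        simp only [List.cons_append]
        by_cases h : j < (σ.src g).length
        · simp only [dif_pos h] at hp ⊢
          exact (c ⟨j, h⟩).isLab.1 q hp i
        · simp only [dif_neg h]
    · intro p g' hp i
      match p with
      | [] =>
        injection hp with hg
        subst hg
        by_cases h : i < (σ.src g).length
        · simp only [List.nil_append, dif_pos h]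
          obtain ⟨g₀, h₀, -⟩ := (c ⟨i, h⟩).root
          simp [h₀, h]
        · simp [List.nil_append, dif_neg h, h]
      | j :: q =>
        by_cases h : j < (σ.src g).length
        · simp only [dif_pos h] at hp
          simp only [List.cons_append, dif_pos h]
          exact (c ⟨j, h⟩).isLab.2.1 q g' hp i
        · simp only [dif_neg h] at hp
          exact nomatch hp
    · intro p g' i g'' hp hpi
      match p with
      | [] =>
        injection hp with hg
        subst hg
        by_cases h : i < (σ.src g).length
        · simp only [List.nil_append, dif_pos h] at hpi
          obtain ⟨g₀, h₀, htgt⟩ := (c ⟨i, h⟩).root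
          rw [h₀, Option.some.injEq] at hpi
          subst hpi
          rw [List.getElem?_eq_getElem h]
          exact congrArg some htgt.symm
        · simp only [List.nil_append, dif_neg h] at hpi
          exact nomatch hpi
      | j :: q =>
        by_cases h : j < (σ.src g).length
        · simp only [dif_pos h] at hp
          simp only [List.cons_append, dif_pos h] at hpi
          exact (c ⟨j, h⟩).isLab.2.2 q g' i g'' hp hpi
        · simp only [dif_neg h] at hp
          exact nomatch hp
  root := ⟨g, rfl, rfl⟩

/-- Sorts with no infinite trees. -/
def S0I : Set σ.Srt := { s | ∀ t : σ.Tree s, t.IsFinite }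
/-- Sorts with no finite trees. -/
def S0F : Set σ.Srt := { s | ∀ t : σ.Tree s, ¬ t.IsFinite }
/-- Sorts with only finitely many finite trees. -/
def SFF : Set σ.Srt := { s | { t : σ.Tree s | t.IsFinite }.Finite }
/-- Sorts with only finitely many infinite trees. -/
def SFI : Set σ.Srt := { s | { t : σ.Tree s | ¬ t.IsFinite }.Finite }
/-- Sorts with exactly one infinite tree. -/
def S1I : Set σ.Srt := { s | ∃! t : σ.Tree s, ¬ t.IsFinite }

/-- Terms of the (extended) first-order language of trees. Variables are
pairs of a sort and a number. -/
inductive Tm : σ.Srt → Type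
  | var (s : σ.Srt) (n : ℕ) : Tm s
  | app (g : σ.Gen) (args : ∀ i : Fin (σ.src g).length, Tm ((σ.src g).get i)) :
      Tm (σ.tgt g)

/-- Valuations assign trees to (sorted) variables. -/
def Val := ∀ s : σ.Srt, ℕ → σ.Tree s

variable {σ}

/-- Evaluation of a term in the structure of trees under a valuation. -/
def Tm.eval (ρ : σ.Val) : ∀ {s : σ.Srt}, σ.Tm s → σ.Tree s
  | _, .var s n => ρ s n
  | _, .app g args => σ.build g (fun i => (args i).eval ρ)

/-- The (sorted) free variables of a term. -/
def Tm.fv : ∀ {s : σ.Srt}, σ.Tm s → Set ((s : σ.Srt) × ℕ)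
  | _, .var s n => {⟨s, n⟩}
  | _, .app _ args => ⋃ i, (args i).fv

/-- A term is flat if it is a variable or a generator applied to variables. -/
def Tm.IsFlat : ∀ {s : σ.Srt}, σ.Tm s → Prop
  | _, .var _ _ => True
  | _, .app g args => ∀ i : Fin (σ.src g).length, ∃ n, args i = Tm.var ((σ.src g).get i) n

/-- A term of the form `f(z̄)`. -/
def Tm.IsApp : ∀ {s : σ.Srt}, σ.Tm s → Prop
  | _, .var _ _ => False
  | _, .app _ _ => True

open Classical in
/-- Update a valuation at one sorted variable. -/
noncomputable def updV (ρ : σ.Val) (s : σ.Srt) (n : ℕ) (t : σ.Tree s) : σ.Val :=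
  fun s' m =>
    if h : s' = s then
      (if m = n then cast (congrArg σ.Tree h.symm) t else ρ s' m)
    else ρ s' m

variable (σ)

/-- Formulae of the extended first-order language of trees: equality,
the finiteness predicates `fin`, propositional connectives and sorted quantifiers. -/
inductive Fml : Type
  | tru : Fml
  | fls : Fml
  | eq {s : σ.Srt} (a b : σ.Tm s) : Fml
  | fin {s : σ.Srt} (a : σ.Tm s) : Fml
  | not (φ : Fml) : Fml
  | and (φ ψ : Fml) : Fml
  | or (φ ψ : Fml) : Fml
  | imp (φ ψ : Fml) : Fml
  | ex (s : σ.Srt) (n : ℕ) (φ : Fml) : Fml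
  | all (s : σ.Srt) (n : ℕ) (φ : Fml) : Fml

variable {σ}

/-- Satisfaction of a formula in the structure `𝒯` of trees under a valuation. -/
def Fml.Sat (ρ : σ.Val) : σ.Fml → Prop
  | .tru => True
  | .fls => False
  | .eq a b => a.eval ρ = b.eval ρ
  | .fin a => (a.eval ρ).IsFinite
  | .not φ => ¬ φ.Sat ρ
  | .and φ ψ => φ.Sat ρ ∧ ψ.Sat ρ
  | .or φ ψ => φ.Sat ρ ∨ ψ.Sat ρ
  | .imp φ ψ => φ.Sat ρ → ψ.Sat ρ
  | .ex s n φ => ∃ t : σ.Tree s, φ.Sat (updV ρ s n t)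
  | .all s n φ => ∀ t : σ.Tree s, φ.Sat (updV ρ s n t)

/-- The free variables of a formula. -/
def Fml.fv : σ.Fml → Set ((s : σ.Srt) × ℕ)
  | .tru => ∅
  | .fls => ∅
  | .eq a b => a.fv ∪ b.fv
  | .fin a => a.fv
  | .not φ => φ.fv
  | .and φ ψ => φ.fv ∪ ψ.fv
  | .or φ ψ => φ.fv ∪ ψ.fv
  | .imp φ ψ => φ.fv ∪ ψ.fv
  | .ex s n φ => φ.fv \ {⟨s, n⟩}
  | .all s n φ => φ.fv \ {⟨s, n⟩}

/-- Two formulae are equivalent in the extended theory of trees if they are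
satisfied by exactly the same valuations. -/
def FmlEquiv (φ ψ : σ.Fml) : Prop := ∀ ρ : σ.Val, φ.Sat ρ ↔ ψ.Sat ρ

end Sig

/-!
Write an infinite tree `t` of sort `s` as `g(t₁, …, tₙ)`. Finite children are values of ground
terms. Grafting the infinite trees of sort `sᵢ` in place of `tᵢ` embeds them into the infinite
trees of sort `s`, so there are at most as many, and strictly fewer unless `g` is unary and the
root of every infinite tree of sort `s` (otherwise a tree with another root is missed, or a
sibling argument can be varied over two different trees). If `s ∉ S1I`, some other infinite tree
`t'` of sort `s` differs from `t` at a position `p`; in the unary case `t'` has root `g` too, and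
descending to the only child shortens `p`. Induction on the number of infinite trees and then on
`p` thus ends at sorts of `S1I`, whose infinite tree is the value of the variable.
-/

namespace Sig

variable {σ : Sig}

@[ext]
theorem Tree.ext {s : σ.Srt} {t u : σ.Tree s} (h : t.L = u.L) : t = u := by
  cases t; cases u; cases h; rfl

theorem Tree.L_append_eq_none {s : σ.Srt} (t : σ.Tree s) {p : List ℕ} (h : t.L p = none)
    (q : List ℕ) : t.L (p ++ q) = none := by
  induction q using List.reverseRecOn with
  | nil => simpa using h
  | append_singleton q i ih => rw [← List.append_assoc]; exact t.isLab.1 _ ih i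

theorem Tree.L_cons_eq_none {s : σ.Srt} (t : σ.Tree s) {g : σ.Gen} (hg : t.L [] = some g)
    {i : ℕ} (hi : (σ.src g).length ≤ i) (q : List ℕ) : t.L (i :: q) = none := by
  have h : t.L [i] = none := Option.not_isSome_iff_eq_none.mp fun h' =>
    absurd ((t.isLab.2.1 [] g hg i).1 h') (not_lt.mpr hi)
  exact t.L_append_eq_none h q

def Tree.child {s : σ.Srt} (t : σ.Tree s) {g : σ.Gen} (hg : t.L [] = some g)
    (i : Fin (σ.src g).length) : σ.Tree ((σ.src g).get i) where
  L q := t.L (i :: q)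
  isLab := ⟨fun p => t.isLab.1 (i :: p), fun p => t.isLab.2.1 (i :: p),
    fun p => t.isLab.2.2 (i :: p)⟩
  root := by
    obtain ⟨g', hg'⟩ := Option.isSome_iff_exists.mp ((t.isLab.2.1 [] g hg i).2 i.isLt)
    refine ⟨g', hg', ?_⟩
    simpa [List.getElem?_eq_getElem i.isLt] using (t.isLab.2.2 [] g i g' hg hg').symm

theorem build_child {g : σ.Gen} (t : σ.Tree (σ.tgt g)) (hg : t.L [] = some g) :
    σ.build g (t.child hg) = t := by
  ext (_ | ⟨i, q⟩) : 2
  · exact hg.symm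
  · by_cases hi : i < (σ.src g).length
    · simp [build, Tree.child, hi]
    · simp [build, hi, t.L_cons_eq_none hg (not_lt.mp hi)]

theorem child_build {g : σ.Gen} {c : ∀ i : Fin (σ.src g).length, σ.Tree ((σ.src g).get i)}
    (hg : (σ.build g c).L [] = some g) (i : Fin (σ.src g).length) :
    (σ.build g c).child hg i = c i := by
  ext q : 2
  simp [build, Tree.child]

theorem build_injective (g : σ.Gen) : Function.Injective (σ.build g) := fun c c' h => by
  funext i
  rw [← child_build (c := c) rfl i, ← child_build (c := c') rfl i]
  simp only [h]

theorem Tree.IsFinite.child {s : σ.Srt} {t : σ.Tree s} (ht : t.IsFinite) {g : σ.Gen}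
    (hg : t.L [] = some g) (i : Fin (σ.src g).length) : (t.child hg i).IsFinite :=
  ht.preimage List.cons_injective.injOn

theorem not_isFinite_build {g : σ.Gen}
    {c : ∀ i : Fin (σ.src g).length, σ.Tree ((σ.src g).get i)} {i : Fin (σ.src g).length}
    (hi : ¬ (c i).IsFinite) : ¬ (σ.build g c).IsFinite := fun h =>
  hi (child_build (c := c) rfl i ▸ h.child rfl i)

theorem Tree.exists_not_isFinite_child {s : σ.Srt} {t : σ.Tree s} {g : σ.Gen}
    (hg : t.L [] = some g) (ht : ¬ t.IsFinite) :
    ∃ i : Fin (σ.src g).length, ¬ (t.child hg i).IsFinite := by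
  by_contra! h
  refine ht (((Set.finite_singleton []).union
    (Set.finite_iUnion fun i => (h i).image (List.cons (i : ℕ)))).subset ?_)
  rintro (_ | ⟨j, q⟩) hp
  · exact Or.inl rfl
  · have hj : j < (σ.src g).length := by
      by_contra hj
      simp [t.L_cons_eq_none hg (not_lt.mp hj)] at hp
    exact Or.inr (Set.mem_iUnion.2 ⟨⟨j, hj⟩, q, hp, rfl⟩)

def uniformL (c : σ.Srt → σ.Gen) : σ.Srt → List ℕ → Option σ.Gen
  | s, [] => some (c s)
  | s, i :: p =>
      if h : i < (σ.src (c s)).length then uniformL c ((σ.src (c s)).get ⟨i, h⟩) p else none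

theorem uniformL_append_singleton (c : σ.Srt → σ.Gen) (s : σ.Srt) (p : List ℕ) (i : ℕ) :
    uniformL c s (p ++ [i]) = (uniformL c s p).bind fun g =>
      if h : i < (σ.src g).length then some (c ((σ.src g).get ⟨i, h⟩)) else none := by
  induction p generalizing s with
  | nil => simp [uniformL]
  | cons j p ih => by_cases hj : j < (σ.src (c s)).length <;> simp [uniformL, hj, ih]

def uniformTree (c : σ.Srt → σ.Gen) (hc : ∀ s, c s ∈ σ.Gens s) (s : σ.Srt) :
    σ.Tree s where
  L := uniformL c s
  isLab := by
    refine ⟨fun p hp i => ?_, fun p g hp i => ?_, fun p g i g' hp hp' => ?_⟩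
    · simp [uniformL_append_singleton, hp]
    · by_cases hi : i < (σ.src g).length <;> simp [uniformL_append_singleton, hp, hi]
    · by_cases hi : i < (σ.src g).length <;> simp [uniformL_append_singleton, hp, hi] at hp'
      rw [← hp', hc]
      simp [hi]
  root := ⟨c s, rfl, hc s⟩

theorem Tree.nonempty (hne : ∀ s : σ.Srt, (σ.Gens s).Nonempty) (s : σ.Srt) :
    Nonempty (σ.Tree s) := by
  choose c hc using hne
  exact ⟨uniformTree c hc s⟩

theorem Tree.exists_root_eq (hne : ∀ s : σ.Srt, (σ.Gens s).Nonempty) {s : σ.Srt} {g : σ.Gen}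
    (hg : g ∈ σ.Gens s) : ∃ t : σ.Tree s, t.L [] = some g := by
  obtain rfl : σ.tgt g = s := hg
  exact ⟨σ.build g fun i => (Tree.nonempty hne _).some, rfl⟩

theorem Tree.nontrivial (htwo : ∀ s : σ.Srt, (σ.Gens s).Nontrivial) (s : σ.Srt) :
    Nontrivial (σ.Tree s) := by
  obtain ⟨g₁, hg₁, g₂, hg₂, hne⟩ := htwo s
  obtain ⟨t₁, ht₁⟩ := Tree.exists_root_eq (fun s => (htwo s).nonempty) hg₁
  obtain ⟨t₂, ht₂⟩ := Tree.exists_root_eq (fun s => (htwo s).nonempty) hg₂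
  exact ⟨t₁, t₂, fun h => hne (Option.some_injective _ (ht₁.symm.trans (h ▸ ht₂)))⟩

theorem Tree.IsFinite.exists_depthLE {s : σ.Srt} {t : σ.Tree s} (h : t.IsFinite) :
    ∃ d, t.DepthLE d := by
  obtain ⟨d, hd⟩ := (h.image List.length).bddAbove
  exact ⟨d, fun p hp => hd ⟨p, hp, rfl⟩⟩

theorem Tree.DepthLE.child {s : σ.Srt} {t : σ.Tree s} {d : ℕ} (h : t.DepthLE (d + 1))
    {g : σ.Gen} (hg : t.L [] = some g) (i : Fin (σ.src g).length) :
    (t.child hg i).DepthLE d :=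
  fun q hq => Nat.le_of_succ_le_succ (h (i :: q) hq)

def infiniteTrees (s : σ.Srt) : Set (σ.Tree s) := {t | ¬ t.IsFinite}

section Grafting

variable {g : σ.Gen}

theorem mapsTo_build_update (c : ∀ i : Fin (σ.src g).length, σ.Tree ((σ.src g).get i))
    (i : Fin (σ.src g).length) :
    Set.MapsTo (fun x => σ.build g (Function.update c i x)) (infiniteTrees _)
      (infiniteTrees (σ.tgt g)) :=
  fun x hx => not_isFinite_build (i := i) (by rwa [Function.update_self])

theorem injective_build_update (c : ∀ i : Fin (σ.src g).length, σ.Tree ((σ.src g).get i))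
    (i : Fin (σ.src g).length) :
    Function.Injective fun x => σ.build g (Function.update c i x) :=
  (build_injective g).comp (Function.update_injective c i)

theorem finite_infiniteTrees_child (c : ∀ i : Fin (σ.src g).length, σ.Tree ((σ.src g).get i))
    (i : Fin (σ.src g).length)
    (hF : (infiniteTrees (σ.tgt g)).Finite) :
    (infiniteTrees ((σ.src g).get i)).Finite :=
  Set.Finite.of_injOn (mapsTo_build_update c i) (injective_build_update c i).injOn hF

theorem ncard_infiniteTrees_child_le (c : ∀ i : Fin (σ.src g).length, σ.Tree ((σ.src g).get i))
    (i : Fin (σ.src g).length)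
    (hF : (infiniteTrees (σ.tgt g)).Finite) :
    (infiniteTrees ((σ.src g).get i)).ncard ≤ (infiniteTrees (σ.tgt g)).ncard :=
  Set.ncard_le_ncard_of_injOn _ (mapsTo_build_update c i) (injective_build_update c i).injOn hF

theorem ncard_infiniteTrees_child_lt_of_root_ne
    (c : ∀ i : Fin (σ.src g).length, σ.Tree ((σ.src g).get i))
    (i : Fin (σ.src g).length)
    (hF : (infiniteTrees (σ.tgt g)).Finite)
    {u : σ.Tree (σ.tgt g)} (hu : ¬ u.IsFinite) (hroot : u.L [] ≠ some g) :
    (infiniteTrees ((σ.src g).get i)).ncard < (infiniteTrees (σ.tgt g)).ncard :=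
  calc _ ≤ (infiniteTrees (σ.tgt g) \ {u}).ncard :=
        Set.ncard_le_ncard_of_injOn _
          (fun x hx => ⟨mapsTo_build_update c i hx, fun h => hroot (by rw [← h]; rfl)⟩)
          (injective_build_update c i).injOn hF.sdiff
    _ < _ := Set.ncard_sdiff_singleton_lt_of_mem hu hF

theorem ncard_infiniteTrees_child_lt_of_ne
    (c : ∀ i : Fin (σ.src g).length, σ.Tree ((σ.src g).get i))
    (i : Fin (σ.src g).length) {j : Fin (σ.src g).length} (hji : j ≠ i)
    [Nontrivial (σ.Tree ((σ.src g).get j))] (hF : (infiniteTrees (σ.tgt g)).Finite)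
    (hi : (infiniteTrees ((σ.src g).get i)).Nonempty) :
    (infiniteTrees ((σ.src g).get i)).ncard < (infiniteTrees (σ.tgt g)).ncard := by
  obtain ⟨u₁, u₂, hu⟩ := exists_pair_ne (σ.Tree ((σ.src g).get j))
  have hinj : Function.Injective
      fun ux : σ.Tree ((σ.src g).get j) × σ.Tree ((σ.src g).get i) =>
        σ.build g (Function.update (Function.update c j ux.1) i ux.2) := by
    rintro ⟨u, x⟩ ⟨u', x'⟩ h
    have h' := build_injective g h
    have hu := congrFun h' j
    have hx := congrFun h' i
    simp only [Function.update_self, Function.update_of_ne hji] at hu hx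
    exact Prod.ext hu hx
  have hle := Set.ncard_le_ncard_of_injOn _ (s := {u₁, u₂} ×ˢ infiniteTrees _)
    (fun ux hux => mapsTo_build_update (Function.update c j ux.1) i hux.2) hinj.injOn hF
  rw [Set.ncard_prod, Set.ncard_pair hu] at hle
  have := (Set.ncard_pos (finite_infiniteTrees_child c i hF)).2 hi
  omega

end Grafting

theorem root_eq_and_unary_of_ncard_child_not_lt (htwo : ∀ s : σ.Srt, (σ.Gens s).Nontrivial)
    {g : σ.Gen} {t t' : σ.Tree (σ.tgt g)} (hF : (infiniteTrees (σ.tgt g)).Finite)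
    (hg : t.L [] = some g) (ht' : ¬ t'.IsFinite) {i : Fin (σ.src g).length}
    (hi : ¬ (t.child hg i).IsFinite)
    (hnlt : ¬ (infiniteTrees ((σ.src g).get i)).ncard < (infiniteTrees (σ.tgt g)).ncard) :
    ∃ hg' : t'.L [] = some g, (σ.src g).length = 1 ∧ ¬ (t'.child hg' i).IsFinite := by
  have hg' : t'.L [] = some g := by
    by_contra h
    exact hnlt (ncard_infiniteTrees_child_lt_of_root_ne (t.child hg) i hF ht' h)
  have hlen : (σ.src g).length = 1 := by
    by_contra hlen
    have : Nontrivial (Fin (σ.src g).length) :=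
      Fin.nontrivial_iff_two_le.2 (by have := i.isLt; omega)
    obtain ⟨j, hj⟩ := exists_ne i
    have := Tree.nontrivial htwo ((σ.src g).get j)
    exact hnlt (ncard_infiniteTrees_child_lt_of_ne (t.child hg) i hj hF ⟨_, hi⟩)
  obtain ⟨k, hk⟩ := t'.exists_not_isFinite_child hg' ht'
  obtain rfl : k = i := Fin.ext (by have := k.isLt; have := i.isLt; omega)
  exact ⟨hg', hlen, hk⟩

section TermValues

variable (X : Set ((s : σ.Srt) × ℕ)) (P : σ.Val → Prop)

def IsTermValue {s : σ.Srt} (t : σ.Tree s) : Prop :=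
  ∃ τ : σ.Tm s, τ.fv ⊆ X ∧ ∀ ρ, P ρ → τ.eval ρ = t

variable {X P}

theorem IsTermValue.build {g : σ.Gen}
    {c : ∀ i : Fin (σ.src g).length, σ.Tree ((σ.src g).get i)}
    (h : ∀ i, IsTermValue X P (c i)) : IsTermValue X P (σ.build g c) := by
  choose τ hfv heval using h
  exact ⟨.app g τ, Set.iUnion_subset hfv,
    fun ρ hρ => congrArg (σ.build g) (funext fun i => heval i ρ hρ)⟩

theorem IsTermValue.of_child {g : σ.Gen} {t : σ.Tree (σ.tgt g)} (hg : t.L [] = some g)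
    (h : ∀ i, IsTermValue X P (t.child hg i)) : IsTermValue X P t :=
  build_child t hg ▸ IsTermValue.build h

theorem isTermValue_of_depthLE : ∀ (d : ℕ) {s : σ.Srt} {t : σ.Tree s},
    t.DepthLE d → IsTermValue X P t
  | d, _, t, hd => by
    obtain ⟨g, hg, rfl⟩ := t.root
    refine IsTermValue.of_child hg fun i => ?_
    cases d with
    | zero =>
      obtain ⟨g', hg', -⟩ := (t.child hg i).root
      exact absurd (hd [i] (Option.isSome_iff_exists.2 ⟨g', hg'⟩)) (by simp)
    | succ d => exact isTermValue_of_depthLE d (hd.child hg i)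

theorem isTermValue_of_isFinite {s : σ.Srt} {t : σ.Tree s} (h : t.IsFinite) :
    IsTermValue X P t :=
  let ⟨d, hd⟩ := h.exists_depthLE
  isTermValue_of_depthLE d hd

theorem isTermValue_var {s : σ.Srt} (hs : s ∈ σ.S1I) {t : σ.Tree s} (ht : ¬ t.IsFinite) :
    IsTermValue {x : (s' : σ.Srt) × ℕ | x.1 ∈ σ.S1I ∧ x.2 = 0}
      (fun ρ => ∀ s' ∈ σ.S1I, ¬ (ρ s' 0).IsFinite) t :=
  ⟨.var s 0, Set.singleton_subset_iff.2 ⟨hs, rfl⟩, fun ρ hρ => hs.unique (hρ s hs) ht⟩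

theorem isTermValue_of_L_ne (htwo : ∀ s : σ.Srt, (σ.Gens s).Nontrivial) {N : ℕ}
    (ih : ∀ s, (infiniteTrees s).Finite → (infiniteTrees s).ncard < N →
      ∀ t : σ.Tree s, ¬ t.IsFinite → IsTermValue X P t) :
    ∀ (p : List ℕ) {s : σ.Srt} {t t' : σ.Tree s}, (infiniteTrees s).Finite →
      (infiniteTrees s).ncard ≤ N → ¬ t.IsFinite → ¬ t'.IsFinite → t.L p ≠ t'.L p →
      IsTermValue X P t := by
  intro p s t t' hF hN ht ht' hp
  obtain ⟨g, hg, rfl⟩ := t.root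
  refine IsTermValue.of_child hg fun i => ?_
  by_cases hi : (t.child hg i).IsFinite
  · exact isTermValue_of_isFinite hi
  have hFi := finite_infiniteTrees_child (t.child hg) i hF
  have hNi := (ncard_infiniteTrees_child_le (t.child hg) i hF).trans hN
  by_cases hlt : (infiniteTrees ((σ.src g).get i)).ncard < (infiniteTrees (σ.tgt g)).ncard
  · exact ih _ hFi (hlt.trans_le hN) _ hi
  obtain ⟨hg', hlen, hi'⟩ := root_eq_and_unary_of_ncard_child_not_lt htwo hF hg ht' hi hlt
  match p, hp with
  | [], hp => exact absurd (hg.trans hg'.symm) hp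
  | j :: q, hp =>
    obtain rfl : (i : ℕ) = j := by
      by_contra hji
      exact hp (by rw [t.L_cons_eq_none hg (by omega), t'.L_cons_eq_none hg' (by omega)])
    exact isTermValue_of_L_ne htwo ih q hFi hNi hi hi' hp

theorem isTermValue_of_finite_infiniteTrees (htwo : ∀ s : σ.Srt, (σ.Gens s).Nontrivial)
    (hS1I : ∀ s ∈ σ.S1I, ∀ t : σ.Tree s, ¬ t.IsFinite → IsTermValue X P t)
    {s : σ.Srt} (hF : (infiniteTrees s).Finite) {t : σ.Tree s} (ht : ¬ t.IsFinite) :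
    IsTermValue X P t := by
  suffices ∀ N s, (infiniteTrees s).Finite → (infiniteTrees s).ncard ≤ N →
      ∀ t : σ.Tree s, ¬ t.IsFinite → IsTermValue X P t from this _ s hF le_rfl t ht
  intro N
  induction N using Nat.strong_induction_on with
  | _ N ih =>
  intro s hF hN t ht
  by_cases hs : s ∈ σ.S1I
  · exact hS1I s hs t ht
  obtain ⟨t', ht', hne⟩ : ∃ t', ¬ t'.IsFinite ∧ t ≠ t' := by
    by_contra! h
    exact hs ⟨t, ht, fun t' ht' => (h t' ht').symm⟩
  obtain ⟨p, hp⟩ : ∃ p, t.L p ≠ t'.L p := by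
    by_contra! h
    exact hne (Tree.ext (funext h))
  exact isTermValue_of_L_ne htwo (fun s' hF' hlt => ih _ hlt s' hF' le_rfl)
    p hF hN ht ht' hp

end TermValues

end Sig

theorem infinite_trees_are_term_values_general (σ : Sig)
    (htwo : ∀ s : σ.Srt, (σ.Gens s).Nontrivial)
    (s : σ.Srt) (hfin : s ∈ Sig.SFI σ) :
    ∀ t : σ.Tree s, ¬ t.IsFinite →
      ∃ τ : σ.Tm s,
        (Sig.Tm.fv τ ⊆ { x : (s' : σ.Srt) × ℕ | x.1 ∈ Sig.S1I σ ∧ x.2 = 0 }) ∧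
        ∀ ρ : σ.Val, (∀ s' ∈ Sig.S1I σ, ¬ (ρ s' 0).IsFinite) →
          Sig.Tm.eval ρ τ = t :=
  fun _ ht => Sig.isTermValue_of_finite_infiniteTrees htwo
    (fun _ hs _ => Sig.isTermValue_var hs) hfin ht

/-- Assume every sort has at least two generators. If `s` has at
least one but only finitely many infinite trees, then every infinite tree of sort
`s` is the value of a finite term whose variables are among `{u_{s'} | s' ∈ S_1I}`,
under any valuation sending each `u_{s'}` to the unique infinite tree of sort `s'`
(a valuation assigning an infinite tree to each such variable necessarily assigns
the unique infinite tree). -/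
theorem infinite_trees_are_term_values (σ : Sig)
    (htwo : ∀ s : σ.Srt, (σ.Gens s).Nontrivial)
    (s : σ.Srt) (hone : ∃ t : σ.Tree s, ¬ t.IsFinite) (hfin : s ∈ Sig.SFI σ) :
    ∀ t : σ.Tree s, ¬ t.IsFinite →
      ∃ τ : σ.Tm s,
        (Sig.Tm.fv τ ⊆ { x : (s' : σ.Srt) × ℕ | x.1 ∈ Sig.S1I σ ∧ x.2 = 0 }) ∧
        ∀ ρ : σ.Val, (∀ s' ∈ Sig.S1I σ, ¬ (ρ s' 0).IsFinite) →
          Sig.Tm.eval ρ τ = t :=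
  infinite_trees_are_term_values_general σ htwo s hfin
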